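/- Let m, m' be finite sets of labeled points and let M be the (|m|·|m'|)×(|m|·|m'|) matrix indexed by pairs (i₁,i₂) ∈ [1,|m|]×[1,|m'|], with M[(i₁,i₂),(j₁,j₂)] = K_Feat(l_{i₁}, l'_{i₂}) · K_Dist(‖x_{i₁}−x_{j₁}‖, ‖x'_{i₂}−x'_{j₂}‖) · 1[i₁≠j₁] · 1[i₂≠j₂]. Then trace(M³) = Σ_{p∈P(m)} Σ_{p'∈P(m')} K_P(p,p'), where P(m) is the set of ordered triples of pairwise-distinct points of m and K_P(p,p') = ∏_{i=1}^{3} K_Feat(l_i,l'_i)·K_Dist(‖x_i−x_{i+1}‖, ‖x'_i−x'_{i+1}‖) with indices mod 3. -/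

import Mathlib

theorem Matrix.trace_pow_three {ι R : Type*} [Fintype ι] [DecidableEq ι] [Semiring R]
    (M : Matrix ι ι R) :
    (M ^ 3).trace = ∑ a, ∑ b, ∑ c, M a b * M b c * M c a := by
  simp only [pow_succ, pow_zero, Matrix.one_mul, Matrix.trace, Matrix.diag_apply,
    Matrix.mul_apply, Finset.sum_mul]
  exact Fintype.sum_congr _ _ fun a => Finset.sum_comm

theorem Fintype.sum_prod_triple {α β R : Type*} [Fintype α] [Fintype β] [AddCommMonoid R]
    (f : α → α → α → β → β → β → R) :
    ∑ p : α × β, ∑ q : α × β, ∑ r : α × β, f p.1 q.1 r.1 p.2 q.2 r.2 =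
      ∑ i, ∑ j, ∑ k, ∑ i', ∑ j', ∑ k', f i j k i' j' k' := by
  simp only [Fintype.sum_prod_type]
  refine Fintype.sum_congr _ _ fun i => ?_
  rw [Finset.sum_comm]
  exact Fintype.sum_congr _ _ fun j =>
    (Fintype.sum_congr _ _ fun i' => Finset.sum_comm).trans Finset.sum_comm

theorem ite_ne_mul_ite_ne_mul_ite_ne {α R : Type*} [DecidableEq α] [MulZeroOneClass R]
    (a b c : α) :
    ((if a ≠ b then 1 else 0) * (if b ≠ c then 1 else 0) * (if c ≠ a then 1 else 0) : R) =
      if a ≠ b ∧ b ≠ c ∧ c ≠ a then 1 else 0 := by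
  simp only [ite_zero_mul_ite_zero, and_assoc, mul_one]

theorem pharmacophore_kernel_trace {L : Type*} (n n' : ℕ)
    (x : Fin n → EuclideanSpace ℝ (Fin 3)) (l : Fin n → L)
    (x' : Fin n' → EuclideanSpace ℝ (Fin 3)) (l' : Fin n' → L)
    (KFeat : L → L → ℝ) (KDist : ℝ → ℝ → ℝ)
    (M : Matrix (Fin n × Fin n') (Fin n × Fin n') ℝ)
    (hM : ∀ i j : Fin n × Fin n',
      M i j = KFeat (l i.1) (l' i.2) * KDist (dist (x i.1) (x j.1)) (dist (x' i.2) (x' j.2)) *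
        (if i.1 ≠ j.1 then 1 else 0) * (if i.2 ≠ j.2 then 1 else 0)) :
    Matrix.trace (M ^ 3) =
      ∑ i₁ : Fin n, ∑ j₁ : Fin n, ∑ k₁ : Fin n, ∑ i₂ : Fin n', ∑ j₂ : Fin n', ∑ k₂ : Fin n',
        (if i₁ ≠ j₁ ∧ j₁ ≠ k₁ ∧ k₁ ≠ i₁ then 1 else 0) *
        (if i₂ ≠ j₂ ∧ j₂ ≠ k₂ ∧ k₂ ≠ i₂ then 1 else 0) *
        (KFeat (l i₁) (l' i₂) * KDist (dist (x i₁) (x j₁)) (dist (x' i₂) (x' j₂)) *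
         (KFeat (l j₁) (l' j₂) * KDist (dist (x j₁) (x k₁)) (dist (x' j₂) (x' k₂))) *
         (KFeat (l k₁) (l' k₂) * KDist (dist (x k₁) (x i₁)) (dist (x' k₂) (x' i₂)))) := by
  rw [Matrix.trace_pow_three]
  refine Eq.trans ?_ (Fintype.sum_prod_triple _)
  refine Fintype.sum_congr _ _ fun p => Fintype.sum_congr _ _ fun q =>
    Fintype.sum_congr _ _ fun r => ?_
  rw [hM, hM, hM, ← ite_ne_mul_ite_ne_mul_ite_ne, ← ite_ne_mul_ite_ne_mul_ite_ne]
  ring
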